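/- Let t ∈ ℕ₊, r ∈ ℕ₊, 0 ≤ j < r, and let (x, x+P₁(y), …, x+P_t(y)) be an integral polynomial progression whose every algebraic relation (Q₀,…,Q_t) has max deg Qᵢ ≤ 1 (algebraic complexity at most 1). Define P̃ᵢ(y) = (Pᵢ(r(y−1)+j) − Pᵢ(j))/r. Then the progression (x, x+P̃₁(y), …, x+P̃_t(y)) also has algebraic complexity at most 1, and moreover a tuple (a₀,…,a_t) ∈ ℝ^{t+1} gives a degree-1 relation a₀x + Σᵢ aᵢ(x+P̃ᵢ(y)) = 0 for the new progression if and only if it gives one for the original progression. -/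

import Mathlib

open Polynomial

/-- `(Q₀, …, Q_t)` is an algebraic relation satisfied by `(x, x+R₁(y), …, x+R_t(y))`. -/
def IsRelation (t : ℕ) (R : Fin t → Polynomial ℝ) (Q : Fin (t + 1) → Polynomial ℝ) : Prop :=
  aeval (X : Polynomial (Polynomial ℝ)) (Q 0) +
    ∑ i : Fin t, aeval ((X : Polynomial (Polynomial ℝ)) + C (R i)) (Q i.succ) = 0

/-- The dilated polynomial `P̃(y) = (P(r(y−1)+j) − P(j))/r`. -/
noncomputable def dilate (r j : ℕ) (P : Polynomial ℝ) : Polynomial ℝ :=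
  ((r : ℝ)⁻¹) • (P.comp (C (r : ℝ) * (X - 1) + C (j : ℝ)) - C (P.eval (j : ℝ)))

/-!
The affine change of variable `y ↦ r(y-1)+j` is invertible, with inverse `y ↦ (y-j)/r + 1`, and
under this inverse `P̃ᵢ` becomes `(Pᵢ - Pᵢ(j))/r`. So substituting `y ↦ (y-j)/r + 1` and
`x ↦ x/r` turns a relation `(Q₀,…,Q_t)` of the dilated progression into the relation
`Qᵢ((u - Pᵢ(j))/r)` of the original one, whose components have the same degrees.
For degree-1 relations, `a₀x + Σ aᵢ(x + Rᵢ) = 0` means `Σ aᵢ = 0` and `Σ aᵢRᵢ = 0`; the dilation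
is linear and kills exactly the constants, and `Σ aᵢPᵢ` vanishes at `0`.
-/

section AffineChange

variable {t : ℕ}

/-- The substitution `x ↦ c x`, `y ↦ g(y)` on `ℝ[y][x]`. -/
noncomputable def affineSubst (g : ℝ[X]) (c : ℝ) : ℝ[X][X] →ₐ[ℝ] ℝ[X][X] :=
  (mapAlgHom (aeval g : ℝ[X] →ₐ[ℝ] ℝ[X])).comp
    ((aeval (C (C c) * X : ℝ[X][X])).restrictScalars ℝ)

lemma affineSubst_X (g : ℝ[X]) (c : ℝ) : affineSubst g c X = C (C c) * X := by
  simp [affineSubst, coe_mapAlgHom, Polynomial.map_mul, algebraMap_eq]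

lemma affineSubst_C (g : ℝ[X]) (c : ℝ) (p : ℝ[X]) : affineSubst g c (C p) = C (p.comp g) := by
  simp [affineSubst, coe_mapAlgHom, comp_eq_aeval]

lemma aeval_comp_linear (u : ℝ[X][X]) (c e : ℝ) (Q : ℝ[X]) :
    aeval u (Q.comp (C c * X + C e)) = aeval (C (C c) * u + C (C e)) Q := by
  rw [aeval_comp]
  simp [algebraMap_eq]

lemma affineSubst_aeval_X_add_C {g p s : ℝ[X]} {c e : ℝ} (hp : p.comp g = C c * s + C e)
    (Q : ℝ[X]) :
    affineSubst g c (aeval (X + C p) Q) = aeval (X + C s) (Q.comp (C c * X + C e)) := by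
  rw [← aeval_algHom_apply, map_add, affineSubst_X, affineSubst_C, hp, aeval_comp_linear,
    C_add, C_mul]
  ring_nf

theorem IsRelation.of_comp {R S : Fin t → ℝ[X]} {Q : Fin (t + 1) → ℝ[X]} (g : ℝ[X]) (c : ℝ)
    (e : Fin t → ℝ) (hRS : ∀ i, (R i).comp g = C c * S i + C (e i)) (hQ : IsRelation t R Q) :
    IsRelation t S (fun i => (Q i).comp (C c * X + C ((Fin.cons 0 e : Fin (t + 1) → ℝ) i))) := by
  have h0 : affineSubst g c (aeval X (Q 0)) = aeval X ((Q 0).comp (C c * X + C 0)) := by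
    simpa using affineSubst_aeval_X_add_C (p := 0) (s := 0) (e := 0) (by simp) (Q 0)
  unfold IsRelation at hQ ⊢
  have h := congrArg (affineSubst g c) hQ
  rw [map_add, map_sum, map_zero, h0] at h
  rw [Finset.sum_congr rfl fun i _ => affineSubst_aeval_X_add_C (hRS i) (Q i.succ)] at h
  simpa using h

lemma natDegree_comp_linear (Q : ℝ[X]) {c : ℝ} (hc : c ≠ 0) (e : ℝ) :
    (Q.comp (C c * X + C e)).natDegree = Q.natDegree := by
  rw [natDegree_comp, natDegree_linear hc, mul_one]

end AffineChange

section Dilate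

variable {r : ℕ} (j : ℕ)

noncomputable def dilateInv (r j : ℕ) : ℝ[X] := C (r : ℝ)⁻¹ * (X - C (j : ℝ)) + 1

lemma comp_dilateInv (hr : (r : ℝ) ≠ 0) (P : ℝ[X]) :
    (dilate r j P).comp (dilateInv r j) = C (r : ℝ)⁻¹ * P + C (-((r : ℝ)⁻¹ * P.eval (j : ℝ))) := by
  have hinv : (C (r : ℝ)) * C (r : ℝ)⁻¹ = 1 := by rw [← C_mul, mul_inv_cancel₀ hr, C_1]
  have hA : (C (r : ℝ) * (X - 1) + C (j : ℝ)).comp (dilateInv r j) = X := by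
    simp only [dilateInv, add_comp, mul_comp, sub_comp, C_comp, X_comp, one_comp]
    linear_combination (X - C (j : ℝ)) * hinv
  rw [dilate, smul_comp, sub_comp, C_comp, comp_assoc, hA, comp_X, smul_eq_C_mul, C_neg, C_mul]
  ring

noncomputable def dilateₗ (r j : ℕ) : ℝ[X] →ₗ[ℝ] ℝ[X] where
  toFun := dilate r j
  map_add' p q := by
    simp only [dilate, add_comp, eval_add, C_add, smul_eq_C_mul]
    ring
  map_smul' a p := by
    simp only [dilate, RingHom.id_apply, smul_eq_C_mul, mul_comp, C_comp, eval_mul, eval_C, C_mul]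
    ring

lemma dilate_sum_smul {ι : Type*} (s : Finset ι) (a : ι → ℝ) (P : ι → ℝ[X]) :
    dilate r j (∑ i ∈ s, a i • P i) = ∑ i ∈ s, a i • dilate r j (P i) :=
  (map_sum (dilateₗ r j) _ s).trans (Finset.sum_congr rfl fun _ _ => map_smul (dilateₗ r j) _ _)

lemma dilate_eq_zero_iff (hr : (r : ℝ) ≠ 0) {S : ℝ[X]} (h0 : S.eval 0 = 0) :
    dilate r j S = 0 ↔ S = 0 := by
  refine ⟨fun h => ?_, fun h => by simp [h, dilate]⟩
  have hS : C (r : ℝ)⁻¹ * (S - C (S.eval (j : ℝ))) = 0 := by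
    rw [← zero_comp (p := dilateInv r j), ← h, comp_dilateInv j hr, C_neg, C_mul]
    ring
  have hS_const : S = C (S.eval (j : ℝ)) :=
    sub_eq_zero.mp ((mul_eq_zero.mp hS).resolve_left (C_ne_zero.mpr (inv_ne_zero hr)))
  have hSj : S.eval (j : ℝ) = 0 := by simpa [h0] using (congrArg (eval 0) hS_const).symm
  rw [hS_const, hSj, C_0]

end Dilate

lemma linear_relation_iff {t : ℕ} (R : Fin t → ℝ[X]) (a : Fin (t + 1) → ℝ) :
    (C (C (a 0)) * X + ∑ i : Fin t, C (C (a i.succ)) * (X + C (R i)) : ℝ[X][X]) = 0 ↔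
      a 0 + ∑ i : Fin t, a i.succ = 0 ∧ ∑ i : Fin t, a i.succ • R i = 0 := by
  have expand : (C (C (a 0)) * X + ∑ i : Fin t, C (C (a i.succ)) * (X + C (R i)) : ℝ[X][X]) =
      C (C (a 0 + ∑ i : Fin t, a i.succ)) * X + C (∑ i : Fin t, a i.succ • R i) := by
    have term (i : Fin t) : (C (C (a i.succ)) * (X + C (R i)) : ℝ[X][X]) =
        C (C (a i.succ)) * X + C (a i.succ • R i) := by
      rw [mul_add, ← C_mul, smul_eq_C_mul]
    rw [Finset.sum_congr rfl fun i _ => term i, Finset.sum_add_distrib, ← Finset.sum_mul,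
      ← map_sum, ← map_sum, ← add_assoc, ← add_mul, ← C_add, ← C_add, ← map_sum]
  rw [expand]
  refine ⟨fun h => ⟨?_, ?_⟩, fun ⟨h1, h2⟩ => by simp [h1, h2]⟩
  · simpa only [coeff_add, coeff_C_mul_X, coeff_C_succ, add_zero, ↓reduceIte, coeff_zero,
      C_eq_zero] using congrArg (coeff · 1) h
  · simpa only [coeff_add, coeff_C_mul_X, coeff_C_zero, zero_add, zero_ne_one, ↓reduceIte,
      coeff_zero] using congrArg (coeff · 0) h

theorem stmt14_general (t : ℕ) (r : ℕ) (hr : 0 < r) (j : ℕ)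
    (P : Fin t → Polynomial ℝ)
    (hint : ∀ i, (∀ n : ℤ, ∃ m : ℤ, (P i).eval (n : ℝ) = m) ∧ (P i).eval 0 = 0)
    (hcx : ∀ Q : Fin (t + 1) → Polynomial ℝ, IsRelation t P Q → ∀ i, (Q i).natDegree ≤ 1) :
    (∀ Q : Fin (t + 1) → Polynomial ℝ, IsRelation t (fun i => dilate r j (P i)) Q →
      ∀ i, (Q i).natDegree ≤ 1) ∧
    (∀ a : Fin (t + 1) → ℝ,
      ((C (C (a 0)) * X : Polynomial (Polynomial ℝ)) +
          ∑ i : Fin t, C (C (a i.succ)) * (X + C (dilate r j (P i))) = 0) ↔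
        ((C (C (a 0)) * X : Polynomial (Polynomial ℝ)) +
          ∑ i : Fin t, C (C (a i.succ)) * (X + C (P i)) = 0)) := by
  have hr' : (r : ℝ) ≠ 0 := Nat.cast_ne_zero.mpr hr.ne'
  refine ⟨fun Q hQ i => ?_, fun a => ?_⟩
  · have hP := hQ.of_comp (dilateInv r j) _ _ (fun i => comp_dilateInv j hr' (P i))
    simpa [natDegree_comp_linear _ (inv_ne_zero hr')] using hcx _ hP i
  · rw [linear_relation_iff, linear_relation_iff, ← dilate_sum_smul, dilate_eq_zero_iff j hr']
    simp [eval_finsetSum, fun i => (hint i).2]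

/-- If `(x, x+P₁(y), …, x+P_t(y))` has algebraic complexity at most 1, so does
the dilated progression, and the degree-1 relations of the two progressions coincide. -/
theorem stmt14 (t : ℕ) (ht : 0 < t) (r : ℕ) (hr : 0 < r) (j : ℕ) (hj : j < r)
    (P : Fin t → Polynomial ℝ)
    (hint : ∀ i, (∀ n : ℤ, ∃ m : ℤ, (P i).eval (n : ℝ) = m) ∧ (P i).eval 0 = 0)
    (hinj : Function.Injective P)
    (hcx : ∀ Q : Fin (t + 1) → Polynomial ℝ, IsRelation t P Q → ∀ i, (Q i).natDegree ≤ 1) :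
    (∀ Q : Fin (t + 1) → Polynomial ℝ, IsRelation t (fun i => dilate r j (P i)) Q →
      ∀ i, (Q i).natDegree ≤ 1) ∧
    (∀ a : Fin (t + 1) → ℝ,
      ((C (C (a 0)) * X : Polynomial (Polynomial ℝ)) +
          ∑ i : Fin t, C (C (a i.succ)) * (X + C (dilate r j (P i))) = 0) ↔
        ((C (C (a 0)) * X : Polynomial (Polynomial ℝ)) +
          ∑ i : Fin t, C (C (a i.succ)) * (X + C (P i)) = 0)) :=
  stmt14_general t r hr j P hint hcx
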